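/- arXiv:2111.02101 — 2 statements merged into one kernel-verified Lean document; each statement's English description precedes it below -/
import Mathlib

section
/- Let $\kappa \geq 1$, $\delta < 1$, and $\theta \leq (1-\delta)/2$. Suppose $(H_t)_{t\geq 0}$ and $(E_t)_{t \geq 0}$ are square matrices in $\mathbb{R}^{n\times n}$ with $\|\kappa^{-1} H_t - I\| \leq \delta$ and $\|E_t\| \leq \kappa\theta$ for all $t$ (operator norm). Define $Q_0 = H_0$ and $Q_t = H_t - E_{t-1} Q_{t-1}^{-1} E_{t-1}^{\top}$ for $t \geq 1$. Then each $Q_t$ is invertible and $\|\kappa^{-1} Q_t - I\| \leq \epsilon_*$ for all $t \geq 0$, where $\epsilon_* = (1+\delta)/2 - \sqrt{(1-\delta)^2/4 - \theta^2} < 1$. -/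
lemma stmt2_aux {n : ℕ} {κ ε : ℝ} (hκ : 0 < κ) (hε : ε < 1)
    {A : EuclideanSpace ℝ (Fin n) →L[ℝ] EuclideanSpace ℝ (Fin n)}
    (h : ‖κ⁻¹ • A - 1‖ ≤ ε) :
    IsUnit A ∧ ‖Ring.inverse A‖ ≤ κ⁻¹ * (1 - ε)⁻¹ := by
  have key : ∀ (B C : EuclideanSpace ℝ (Fin n) →L[ℝ] EuclideanSpace ℝ (Fin n)),
      B * (κ⁻¹ • C) = (κ⁻¹ • B) * C := by
    intro B C
    ext x
    simp [ContinuousLinearMap.mul_apply, map_smul]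
  set a := κ⁻¹ • A with ha
  have hlt : ‖1 - a‖ < 1 := by
    rw [norm_sub_rev]; exact lt_of_le_of_lt h hε
  set u := Units.oneSub (1 - a) hlt with hudef
  have huval : (u : EuclideanSpace ℝ (Fin n) →L[ℝ] EuclideanSpace ℝ (Fin n)) = a := by
    rw [hudef, Units.val_oneSub, sub_sub_cancel]
  have hiu : ‖((u⁻¹ : _ˣ) : EuclideanSpace ℝ (Fin n) →L[ℝ] EuclideanSpace ℝ (Fin n))‖ ≤ (1 - ε)⁻¹ := by
    have h1 : ((u⁻¹ : _ˣ) : EuclideanSpace ℝ (Fin n) →L[ℝ] EuclideanSpace ℝ (Fin n))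
        = ∑' m : ℕ, (1 - a) ^ m := rfl
    rw [h1]
    have h2 := tsum_geometric_le_of_norm_lt_one (1 - a) hlt
    have h3 : ‖(1 : EuclideanSpace ℝ (Fin n) →L[ℝ] EuclideanSpace ℝ (Fin n))‖ ≤ 1 :=
      ContinuousLinearMap.norm_id_le
    have hεn : ‖1 - a‖ ≤ ε := by rw [norm_sub_rev]; exact h
    have h4 : (1 - ‖1 - a‖)⁻¹ ≤ (1 - ε)⁻¹ := by gcongr <;> linarith
    linarith
  have hv1 : A * (κ⁻¹ • ((u⁻¹ : _ˣ) : EuclideanSpace ℝ (Fin n) →L[ℝ] EuclideanSpace ℝ (Fin n))) = 1 := by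
    rw [key, ← ha, ← huval, u.mul_inv]
  have hv2 : (κ⁻¹ • ((u⁻¹ : _ˣ) : EuclideanSpace ℝ (Fin n) →L[ℝ] EuclideanSpace ℝ (Fin n))) * A = 1 := by
    rw [← key, ← ha, ← huval, u.inv_mul]
  refine ⟨⟨⟨A, _, hv1, hv2⟩, rfl⟩, ?_⟩
  have hinv : Ring.inverse A
      = κ⁻¹ • ((u⁻¹ : _ˣ) : EuclideanSpace ℝ (Fin n) →L[ℝ] EuclideanSpace ℝ (Fin n)) :=
    Ring.inverse_unit ⟨A, _, hv1, hv2⟩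
  rw [hinv]
  have hns : ‖κ⁻¹ • ((u⁻¹ : _ˣ) : EuclideanSpace ℝ (Fin n) →L[ℝ] EuclideanSpace ℝ (Fin n))‖
      = ‖κ⁻¹‖ * ‖((u⁻¹ : _ˣ) : EuclideanSpace ℝ (Fin n) →L[ℝ] EuclideanSpace ℝ (Fin n))‖ :=
    norm_smul κ⁻¹ ((u⁻¹ : _ˣ) : EuclideanSpace ℝ (Fin n) →L[ℝ] EuclideanSpace ℝ (Fin n))
  rw [hns, Real.norm_eq_abs, abs_of_pos (inv_pos.2 hκ)]
  exact mul_le_mul_of_nonneg_left hiu (by positivity)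

set_option maxHeartbeats 1000000 in
/-- Stability of the block LU (Schur complement) recursion:
`Q₀ = H₀`, `Q_{t+1} = H_{t+1} - E_t Q_t⁻¹ E_tᵀ` stays invertible and close to `κ·I`. -/
theorem stmt2 {n : ℕ} (κ δ θ : ℝ) (hκ : 1 ≤ κ) (hδ : δ < 1) (hθ : θ ≤ (1 - δ) / 2)
    (H E : ℕ → EuclideanSpace ℝ (Fin n) →L[ℝ] EuclideanSpace ℝ (Fin n))
    (hH : ∀ t, ‖κ⁻¹ • H t - 1‖ ≤ δ) (hE : ∀ t, ‖E t‖ ≤ κ * θ)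
    (Q : ℕ → EuclideanSpace ℝ (Fin n) →L[ℝ] EuclideanSpace ℝ (Fin n))
    (hQ0 : Q 0 = H 0)
    (hQ : ∀ t, Q (t + 1) =
      H (t + 1) - E t * Ring.inverse (Q t) * ContinuousLinearMap.adjoint (E t)) :
    ((1 + δ) / 2 - Real.sqrt ((1 - δ) ^ 2 / 4 - θ ^ 2) < 1) ∧
    ∀ t, IsUnit (Q t) ∧
      ‖κ⁻¹ • Q t - 1‖ ≤ (1 + δ) / 2 - Real.sqrt ((1 - δ) ^ 2 / 4 - θ ^ 2) := by
  have hκ0 : (0 : ℝ) < κ := lt_of_lt_of_le one_pos hκ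
  have hδ0 : (0 : ℝ) ≤ δ := le_trans (norm_nonneg _) (hH 0)
  have hθ0 : (0 : ℝ) ≤ θ := by
    have h0 : (0 : ℝ) ≤ κ * θ := le_trans (norm_nonneg _) (hE 0)
    nlinarith
  set s := Real.sqrt ((1 - δ) ^ 2 / 4 - θ ^ 2) with hs
  have harg : (0 : ℝ) ≤ (1 - δ) ^ 2 / 4 - θ ^ 2 := by nlinarith
  have hs0 : 0 ≤ s := Real.sqrt_nonneg _
  have hssq : s ^ 2 = (1 - δ) ^ 2 / 4 - θ ^ 2 := Real.sq_sqrt harg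
  have hsle : s ≤ (1 - δ) / 2 := by nlinarith
  set ε := (1 + δ) / 2 - s with he
  have hε1 : ε < 1 := by simp only [he]; nlinarith
  have hδε : δ ≤ ε := by simp only [he]; nlinarith
  have hε0 : 0 ≤ ε := le_trans hδ0 hδε
  have h1ε : (0 : ℝ) < 1 - ε := by linarith
  have hprod : (ε - δ) * (1 - ε) = θ ^ 2 := by
    have h5 : ((1 + δ) / 2 - s - δ) * (1 - ((1 + δ) / 2 - s)) = (1 - δ) ^ 2 / 4 - s ^ 2 := by
      ring
    rw [he, h5, hssq]; ring
  have hfix : δ + θ ^ 2 / (1 - ε) ≤ ε := by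
    rw [← hprod, mul_div_assoc, div_self h1ε.ne', mul_one]; linarith
  refine ⟨hε1, ?_⟩
  intro t
  induction t with
  | zero =>
    have hb : ‖κ⁻¹ • Q 0 - 1‖ ≤ ε := by rw [hQ0]; exact le_trans (hH 0) hδε
    exact ⟨(stmt2_aux hκ0 hε1 hb).1, hb⟩
  | succ t ih =>
    obtain ⟨-, hb⟩ := ih
    have hinv := (stmt2_aux hκ0 hε1 hb).2
    have hadj : ‖ContinuousLinearMap.adjoint (E t)‖ = ‖E t‖ :=
      ContinuousLinearMap.adjoint.norm_map (E t)
    have hb' : ‖κ⁻¹ • Q (t + 1) - 1‖ ≤ ε := by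
      rw [hQ t]
      have hss : κ⁻¹ • (H (t + 1) - E t * Ring.inverse (Q t) *
            ContinuousLinearMap.adjoint (E t))
          = κ⁻¹ • H (t + 1) -
            κ⁻¹ • (E t * Ring.inverse (Q t) * ContinuousLinearMap.adjoint (E t)) :=
        smul_sub κ⁻¹ _ _
      have hsplit : κ⁻¹ • (H (t + 1) - E t * Ring.inverse (Q t) *
            ContinuousLinearMap.adjoint (E t)) - 1
          = (κ⁻¹ • H (t + 1) - 1) -
            κ⁻¹ • (E t * Ring.inverse (Q t) * ContinuousLinearMap.adjoint (E t)) := by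
        rw [hss]; abel
      rw [hsplit]
      have hn1 : ‖κ⁻¹ • (E t * Ring.inverse (Q t) * ContinuousLinearMap.adjoint (E t))‖
          ≤ θ ^ 2 / (1 - ε) := by
        have hns : ‖κ⁻¹ • (E t * Ring.inverse (Q t) * ContinuousLinearMap.adjoint (E t))‖
            = ‖κ⁻¹‖ * ‖E t * Ring.inverse (Q t) * ContinuousLinearMap.adjoint (E t)‖ :=
          norm_smul κ⁻¹ (E t * Ring.inverse (Q t) * ContinuousLinearMap.adjoint (E t))
        rw [hns, Real.norm_eq_abs, abs_of_pos (inv_pos.2 hκ0)]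
        have hm : ‖E t * Ring.inverse (Q t) * ContinuousLinearMap.adjoint (E t)‖
            ≤ ‖E t‖ * ‖Ring.inverse (Q t)‖ * ‖ContinuousLinearMap.adjoint (E t)‖ :=
          le_trans (norm_mul_le _ _)
            (mul_le_mul_of_nonneg_right (norm_mul_le _ _) (norm_nonneg _))
        have hm2 : ‖E t‖ * ‖Ring.inverse (Q t)‖ * ‖ContinuousLinearMap.adjoint (E t)‖
            ≤ (κ * θ) * (κ⁻¹ * (1 - ε)⁻¹) * (κ * θ) := by
          rw [hadj]
          have hE' := hE t
          gcongr <;> positivity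
        have heq : κ⁻¹ * ((κ * θ) * (κ⁻¹ * (1 - ε)⁻¹) * (κ * θ)) = θ ^ 2 / (1 - ε) := by
          field_simp
        calc κ⁻¹ * ‖E t * Ring.inverse (Q t) * ContinuousLinearMap.adjoint (E t)‖
            ≤ κ⁻¹ * ((κ * θ) * (κ⁻¹ * (1 - ε)⁻¹) * (κ * θ)) := by
              exact mul_le_mul_of_nonneg_left (le_trans hm hm2) (by positivity)
          _ = θ ^ 2 / (1 - ε) := heq
      calc ‖(κ⁻¹ • H (t + 1) - 1) -
            κ⁻¹ • (E t * Ring.inverse (Q t) * ContinuousLinearMap.adjoint (E t))‖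
          ≤ ‖κ⁻¹ • H (t + 1) - 1‖ +
            ‖κ⁻¹ • (E t * Ring.inverse (Q t) * ContinuousLinearMap.adjoint (E t))‖ :=
            norm_sub_le _ _
        _ ≤ δ + θ ^ 2 / (1 - ε) := add_le_add (hH (t + 1)) hn1
        _ ≤ ε := hfix
    exact ⟨(stmt2_aux hκ0 hε1 hb').1, hb'⟩
end

section
/- Consider the block tridiagonal system with blocks $H_t \in \mathbb{R}^{n\times n}$ on the diagonal and $E_t$ on the sub/super-diagonals ($E_t^{\top}$ above, $E_t$ below), and right-hand side blocks $g_t$ with $\|g_t\| \leq M$ for all $t = 0, \dots, T$. Suppose there exist $\kappa \geq 1$, $\delta < 1$, $\theta \leq (1-\delta)/2$ with $\|\kappa^{-1} H_t - I\| \leq \delta$ and $\|E_t\| \leq \kappa\theta$, and let $\epsilon_* = (1+\delta)/2 - \sqrt{(1-\delta)^2/4-\theta^2}$. If $\rho = \theta/(1-\epsilon_*) < 1$, then the unique solution $(\hat x_0, \dots, \hat x_T)$ satisfies, for every $t$, $\|\hat x_t\| \leq \frac{M(1-\rho^{T-t+1})}{\kappa(1-\epsilon_*)(1-\rho)^2}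 \leq \frac{M}{\kappa(1-\epsilon_*)(1-\rho)^2}$. -/
set_option maxHeartbeats 1000000 in
/-- Frame-by-frame bound on the solution of a block diagonally dominant
block-tridiagonal system with uniformly bounded right-hand side blocks. -/
theorem stmt8 {n : ℕ} (T : ℕ) (hT : 1 ≤ T) (κ δ θ M εs ρ : ℝ)
    (hκ : 1 ≤ κ) (hδ : δ < 1) (hθ : θ ≤ (1 - δ) / 2)
    (hεs : εs = (1 + δ) / 2 - Real.sqrt ((1 - δ) ^ 2 / 4 - θ ^ 2))
    (hρdef : ρ = θ / (1 - εs)) (hρ : ρ < 1)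
    (H Eo : ℕ → EuclideanSpace ℝ (Fin n) →L[ℝ] EuclideanSpace ℝ (Fin n))
    (g x : ℕ → EuclideanSpace ℝ (Fin n))
    (hH : ∀ t ≤ T, ‖κ⁻¹ • H t - 1‖ ≤ δ)
    (hE : ∀ t < T, ‖Eo t‖ ≤ κ * θ)
    (hg : ∀ t ≤ T, ‖g t‖ ≤ M)
    (heq0 : H 0 (x 0) + ContinuousLinearMap.adjoint (Eo 0) (x 1) = g 0)
    (heqmid : ∀ t, 0 < t → t < T →
      Eo (t - 1) (x (t - 1)) + H t (x t) +
        ContinuousLinearMap.adjoint (Eo t) (x (t + 1)) = g t)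
    (heqT : Eo (T - 1) (x (T - 1)) + H T (x T) = g T) :
    ∀ t ≤ T,
      ‖x t‖ ≤ M * (1 - ρ ^ (T - t + 1)) / (κ * (1 - εs) * (1 - ρ) ^ 2) ∧
      M * (1 - ρ ^ (T - t + 1)) / (κ * (1 - εs) * (1 - ρ) ^ 2) ≤
        M / (κ * (1 - εs) * (1 - ρ) ^ 2) := by
  have hκ0 : (0:ℝ) < κ := lt_of_lt_of_le one_pos hκ
  have hθ0 : (0:ℝ) ≤ θ := by
    have h0 := hE 0 hT
    have := norm_nonneg (Eo 0)
    nlinarith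
  have hM0 : (0:ℝ) ≤ M := le_trans (norm_nonneg (g 0)) (hg 0 (Nat.zero_le T))
  -- algebraic identities for εs, ρ
  obtain ⟨s0, hs0⟩ : ∃ s0 : ℝ, s0 = Real.sqrt ((1 - δ) ^ 2 / 4 - θ ^ 2) := ⟨_, rfl⟩
  have hs0nn : 0 ≤ s0 := hs0 ▸ Real.sqrt_nonneg _
  have hθsq : θ ^ 2 ≤ (1 - δ) ^ 2 / 4 := by nlinarith
  have hs0sq : s0 ^ 2 = (1 - δ) ^ 2 / 4 - θ ^ 2 := by
    rw [hs0]; exact Real.sq_sqrt (by linarith)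
  obtain ⟨a, ha⟩ : ∃ a : ℝ, a = 1 - εs := ⟨_, rfl⟩
  have haval : a = (1 - δ) / 2 + s0 := by rw [ha, hεs, hs0]; ring
  have ha0 : 0 < a := by rw [haval]; linarith
  have hid : a * (1 - δ) = a ^ 2 + θ ^ 2 := by
    rw [haval]; linear_combination (-1 : ℝ) * hs0sq
  have hρval : ρ * a = θ := by rw [hρdef, ← ha]; field_simp
  have hρ0 : 0 ≤ ρ := by
    rw [hρdef, ← ha]; exact div_nonneg hθ0 ha0.le
  have h1δ : 1 - δ = a + ρ ^ 2 * a := by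
    have h : a * (1 - δ) = a * (a + ρ ^ 2 * a) := by
      linear_combination hid - (θ + ρ * a) * hρval
    exact mul_left_cancel₀ (ne_of_gt ha0) h
  have hkey : θ * (1 + ρ ^ 2) = (1 - δ) * ρ := by
    linear_combination (-(1 + ρ ^ 2)) * hρval - ρ * h1δ
  have hP : a * (1 - ρ) ^ 2 = 1 - δ - 2 * θ := by
    linear_combination (-1 : ℝ) * h1δ - 2 * hρval
  have hP0 : 0 < 1 - δ - 2 * θ := by
    have h := mul_pos ha0 (pow_pos (show (0:ℝ) < 1 - ρ by linarith) 2)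
    linarith [hP]
  obtain ⟨D, hD⟩ : ∃ D : ℝ, D = κ * (1 - εs) * (1 - ρ) ^ 2 := ⟨_, rfl⟩
  have hDval : D = κ * (1 - δ - 2 * θ) := by rw [hD, ← ha, ← hP]; ring
  have hD0 : 0 < D := by rw [hDval]; positivity
  obtain ⟨C, hC⟩ : ∃ C : ℝ, C = M / D := ⟨_, rfl⟩
  have hC0 : 0 ≤ C := hC ▸ div_nonneg hM0 hD0.le
  have hm : M / κ = C * (1 - δ - 2 * θ) := by
    have h1 : (1 - δ - 2 * θ) ≠ 0 := ne_of_gt hP0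
    have h2 : κ ≠ 0 := ne_of_gt hκ0
    rw [hC, hDval]
    field_simp
  obtain ⟨B, hBdef⟩ : ∃ B : ℕ → ℝ, ∀ t, B t = C * (1 - ρ ^ (T - t + 1)) :=
    ⟨_, fun t => rfl⟩
  -- pointwise estimate skeleton
  have hstep : ∀ t, t ≤ T → ‖x t‖ ≤ δ * ‖x t‖ + κ⁻¹ * ‖H t (x t)‖ := by
    intro t ht
    have e : x t = κ⁻¹ • (H t (x t)) - ((κ⁻¹ • H t - 1) (x t)) := by
      simp [ContinuousLinearMap.sub_apply, ContinuousLinearMap.smul_apply,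
        ContinuousLinearMap.one_apply]
    calc ‖x t‖ = ‖κ⁻¹ • (H t (x t)) - ((κ⁻¹ • H t - 1) (x t))‖ := by rw [← e]
      _ ≤ ‖κ⁻¹ • (H t (x t))‖ + ‖(κ⁻¹ • H t - 1) (x t)‖ := norm_sub_le _ _
      _ ≤ δ * ‖x t‖ + κ⁻¹ * ‖H t (x t)‖ := by
          have h1 : ‖κ⁻¹ • (H t (x t))‖ = κ⁻¹ * ‖H t (x t)‖ := by
            rw [norm_smul, Real.norm_eq_abs, abs_of_nonneg (inv_nonneg.2 hκ0.le)]
          have h2 : ‖(κ⁻¹ • H t - 1) (x t)‖ ≤ δ * ‖x t‖ :=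
            le_trans ((κ⁻¹ • H t - 1).le_opNorm (x t))
              (mul_le_mul_of_nonneg_right (hH t ht) (norm_nonneg _))
          linarith
  have hadj : ∀ t, ‖ContinuousLinearMap.adjoint (Eo t)‖ = ‖Eo t‖ := fun t =>
    LinearIsometryEquiv.norm_map ContinuousLinearMap.adjoint (Eo t)
  have hcomb : ∀ t, t ≤ T → ∀ S : ℝ, 0 ≤ S → ‖H t (x t)‖ ≤ M + κ * θ * S →
      (1 - δ) * ‖x t‖ ≤ M / κ + θ * S := by
    intro t ht S hS hN
    have h1 := hstep t ht
    have h2 : κ⁻¹ * ‖H t (x t)‖ ≤ κ⁻¹ * (M + κ * θ * S) :=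
      mul_le_mul_of_nonneg_left hN (inv_nonneg.2 hκ0.le)
    have h3 : κ⁻¹ * (M + κ * θ * S) = M / κ + θ * S := by
      field_simp
    linarith
  -- the three estimates
  have hest0 : (1 - δ) * ‖x 0‖ ≤ M / κ + θ * ‖x 1‖ := by
    apply hcomb 0 (Nat.zero_le T) _ (norm_nonneg _)
    have e : H 0 (x 0) = g 0 - ContinuousLinearMap.adjoint (Eo 0) (x 1) := by
      rw [← heq0]; abel
    rw [e]
    calc ‖g 0 - ContinuousLinearMap.adjoint (Eo 0) (x 1)‖
        ≤ ‖g 0‖ + ‖ContinuousLinearMap.adjoint (Eo 0) (x 1)‖ := norm_sub_le _ _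
      _ ≤ M + κ * θ * ‖x 1‖ := by
          have h1 := (ContinuousLinearMap.adjoint (Eo 0)).le_opNorm (x 1)
          rw [hadj 0] at h1
          have h2 : ‖Eo 0‖ * ‖x 1‖ ≤ κ * θ * ‖x 1‖ :=
            mul_le_mul_of_nonneg_right (hE 0 hT) (norm_nonneg _)
          have h3 := hg 0 (Nat.zero_le T)
          linarith
  have hestT : (1 - δ) * ‖x T‖ ≤ M / κ + θ * ‖x (T - 1)‖ := by
    apply hcomb T le_rfl _ (norm_nonneg _)
    have e : H T (x T) = g T - Eo (T - 1) (x (T - 1)) := by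
      rw [← heqT]; abel
    rw [e]
    calc ‖g T - Eo (T - 1) (x (T - 1))‖
        ≤ ‖g T‖ + ‖Eo (T - 1) (x (T - 1))‖ := norm_sub_le _ _
      _ ≤ M + κ * θ * ‖x (T - 1)‖ := by
          have h1 := (Eo (T - 1)).le_opNorm (x (T - 1))
          have h2 : ‖Eo (T - 1)‖ * ‖x (T - 1)‖ ≤ κ * θ * ‖x (T - 1)‖ :=
            mul_le_mul_of_nonneg_right (hE (T - 1) (by omega)) (norm_nonneg _)
          have h3 := hg T le_rfl
          linarith
  have hestm : ∀ t, 0 < t → t < T →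
      (1 - δ) * ‖x t‖ ≤ M / κ + θ * (‖x (t - 1)‖ + ‖x (t + 1)‖) := by
    intro t ht0 htT
    apply hcomb t htT.le _ (by positivity)
    have e : H t (x t) = g t - Eo (t - 1) (x (t - 1))
        - ContinuousLinearMap.adjoint (Eo t) (x (t + 1)) := by
      rw [← heqmid t ht0 htT]; abel
    rw [e]
    calc ‖g t - Eo (t - 1) (x (t - 1)) - ContinuousLinearMap.adjoint (Eo t) (x (t + 1))‖
        ≤ ‖g t - Eo (t - 1) (x (t - 1))‖ + ‖ContinuousLinearMap.adjoint (Eo t) (x (t + 1))‖ :=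
          norm_sub_le _ _
      _ ≤ ‖g t‖ + ‖Eo (t - 1) (x (t - 1))‖ + ‖ContinuousLinearMap.adjoint (Eo t) (x (t + 1))‖ := by
          have h0 := norm_sub_le (g t) (Eo (t - 1) (x (t - 1)))
          linarith
      _ ≤ M + κ * θ * (‖x (t - 1)‖ + ‖x (t + 1)‖) := by
          have h1 := (Eo (t - 1)).le_opNorm (x (t - 1))
          have h2 : ‖Eo (t - 1)‖ * ‖x (t - 1)‖ ≤ κ * θ * ‖x (t - 1)‖ :=
            mul_le_mul_of_nonneg_right (hE (t - 1) (by omega)) (norm_nonneg _)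
          have h3 := (ContinuousLinearMap.adjoint (Eo t)).le_opNorm (x (t + 1))
          rw [hadj t] at h3
          have h4 : ‖Eo t‖ * ‖x (t + 1)‖ ≤ κ * θ * ‖x (t + 1)‖ :=
            mul_le_mul_of_nonneg_right (hE t htT) (norm_nonneg _)
          have h5 := hg t htT.le
          nlinarith
  -- supersolution inequalities
  have hBT : M / κ + θ * B (T - 1) ≤ (1 - δ) * B T := by
    have e1 : T - T + 1 = 1 := by omega
    have e2 : T - (T - 1) + 1 = 2 := by omega
    rw [hBdef, hBdef, e1, e2, hm]
    apply le_of_eq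
    linear_combination (-C) * hkey
  have hBm : ∀ t, 0 < t → t < T →
      M / κ + θ * (B (t - 1) + B (t + 1)) = (1 - δ) * B t := by
    intro t ht0 htT
    have e2 : T - (t - 1) + 1 = (T - t) + 2 := by omega
    have e3 : T - (t + 1) + 1 = T - t := by omega
    rw [hBdef, hBdef, hBdef, e2, e3, hm]
    linear_combination (-(C * ρ ^ (T - t))) * hkey
  have hB0 : M / κ + θ * B 1 ≤ (1 - δ) * B 0 := by
    have e1 : T - 0 + 1 = T + 1 := by omega
    have e2 : T - 1 + 1 = T := by omega
    rw [hBdef, hBdef, e1, e2, hm]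
    have hdiff : (1 - δ) * (C * (1 - ρ ^ (T + 1))) -
        (C * (1 - δ - 2 * θ) + θ * (C * (1 - ρ ^ T))) = C * θ * (1 - ρ ^ (T + 2)) := by
      linear_combination (C * ρ ^ T) * hkey
    have hpow : ρ ^ (T + 2) ≤ 1 := pow_le_one₀ hρ0 hρ.le
    nlinarith [mul_nonneg (mul_nonneg hC0 hθ0) (sub_nonneg.2 hpow)]
  -- maximum principle
  obtain ⟨t0, ht0mem, ht0max⟩ := Finset.exists_max_image (Finset.range (T + 1))
    (fun t => ‖x t‖ - B t) ⟨0, by simp⟩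
  have ht0T : t0 ≤ T := by
    have := Finset.mem_range.mp ht0mem; omega
  have hd0 : ‖x t0‖ - B t0 ≤ 0 := by
    by_contra hcon
    push_neg at hcon
    rcases Nat.eq_zero_or_pos t0 with h0 | hpos
    · subst h0
      have h1 : ‖x 1‖ - B 1 ≤ ‖x 0‖ - B 0 :=
        ht0max 1 (Finset.mem_range.mpr (by omega))
      have h2 : θ * (‖x 1‖ - B 1) ≤ θ * (‖x 0‖ - B 0) :=
        mul_le_mul_of_nonneg_left h1 hθ0
      have e1 : (1 - δ) * (‖x 0‖ - B 0) = (1 - δ) * ‖x 0‖ - (1 - δ) * B 0 := by ring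
      have e2 : θ * (‖x 1‖ - B 1) = θ * ‖x 1‖ - θ * B 1 := by ring
      have e4 : (1 - δ - θ) * (‖x 0‖ - B 0)
          = (1 - δ) * (‖x 0‖ - B 0) - θ * (‖x 0‖ - B 0) := by ring
      have hpp : 0 < (1 - δ - θ) * (‖x 0‖ - B 0) :=
        mul_pos (by linarith) hcon
      linarith [hest0, hB0]
    rcases eq_or_lt_of_le ht0T with hTe | hlt
    · subst hTe
      have h1 : ‖x (t0 - 1)‖ - B (t0 - 1) ≤ ‖x t0‖ - B t0 :=
        ht0max (t0 - 1) (Finset.mem_range.mpr (by omega))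
      have h2 : θ * (‖x (t0 - 1)‖ - B (t0 - 1)) ≤ θ * (‖x t0‖ - B t0) :=
        mul_le_mul_of_nonneg_left h1 hθ0
      have e1 : (1 - δ) * (‖x t0‖ - B t0) = (1 - δ) * ‖x t0‖ - (1 - δ) * B t0 := by ring
      have e2 : θ * (‖x (t0 - 1)‖ - B (t0 - 1))
          = θ * ‖x (t0 - 1)‖ - θ * B (t0 - 1) := by ring
      have e4 : (1 - δ - θ) * (‖x t0‖ - B t0)
          = (1 - δ) * (‖x t0‖ - B t0) - θ * (‖x t0‖ - B t0) := by ring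
      have hpp : 0 < (1 - δ - θ) * (‖x t0‖ - B t0) :=
        mul_pos (by linarith) hcon
      linarith [hestT, hBT]
    · have h1 : ‖x (t0 - 1)‖ - B (t0 - 1) ≤ ‖x t0‖ - B t0 :=
        ht0max (t0 - 1) (Finset.mem_range.mpr (by omega))
      have h1' : ‖x (t0 + 1)‖ - B (t0 + 1) ≤ ‖x t0‖ - B t0 :=
        ht0max (t0 + 1) (Finset.mem_range.mpr (by omega))
      have h2 : θ * ((‖x (t0 - 1)‖ - B (t0 - 1)) + (‖x (t0 + 1)‖ - B (t0 + 1)))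
          ≤ θ * (2 * (‖x t0‖ - B t0)) :=
        mul_le_mul_of_nonneg_left (by linarith) hθ0
      have e1 : (1 - δ) * (‖x t0‖ - B t0) = (1 - δ) * ‖x t0‖ - (1 - δ) * B t0 := by ring
      have e2 : θ * ((‖x (t0 - 1)‖ - B (t0 - 1)) + (‖x (t0 + 1)‖ - B (t0 + 1)))
          = θ * (‖x (t0 - 1)‖ + ‖x (t0 + 1)‖) - θ * (B (t0 - 1) + B (t0 + 1)) := by ring
      have e4 : (1 - δ - 2 * θ) * (‖x t0‖ - B t0)
          = (1 - δ) * (‖x t0‖ - B t0) - θ * (2 * (‖x t0‖ - B t0)) := by ring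
      have hpp : 0 < (1 - δ - 2 * θ) * (‖x t0‖ - B t0) :=
        mul_pos hP0 hcon
      linarith [hestm t0 hpos hlt, hBm t0 hpos hlt]
  intro t ht
  have hxB : ‖x t‖ ≤ B t := by
    have := ht0max t (Finset.mem_range.mpr (by omega))
    linarith
  constructor
  · have hBeq : B t = M * (1 - ρ ^ (T - t + 1)) / D := by
      rw [hBdef, hC]; ring
    rw [← hD, ← hBeq]
    exact hxB
  · rw [← hD]
    have hnum : M * (1 - ρ ^ (T - t + 1)) ≤ M := by
      nlinarith [pow_nonneg hρ0 (T - t + 1)]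
    exact div_le_div_of_nonneg_right hnum hD0.le
end
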